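/- Higher even moments: for α ∈ (0,2) and even integer p > 2, the p-th moment ⟨ΔX^p_n⟩ = Σ_{j=−n}^{n} A_j j^p of the slicer distribution satisfies ⟨ΔX^p_n⟩ / n^{p−α} → 2p/(p − α) as n → ∞. -/

import Mathlib

/-!
With `H n = ∑_{0 ≤ j ≤ n} A_j j^p`, the definition of `A` gives, for `n ≥ 1`, the exact
recurrence `H (n + 2) = H n + ℓ_{n+1} ((n + 2)^p - n^p)`: passing from `n` to `n + 2` only
moves the mass `ℓ_{n+1}` from `n` to `n + 2`. Since `ℓ_{n+1} ~ n^{-α}` and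
`(n + 2)^q - n^q ~ 2 q n^{q-1}`, these increments are asymptotic to `p / (p - α)` times those
of `n^{p-α}`, so the Stolz–Cesàro theorem, applied along both residue classes mod 2, gives
`H n / n^{p-α} → p / (p - α)`. By the symmetry of `A` and the evenness of `p`, the moment
is `2 H n`.
-/

open Filter Topology Finset

noncomputable def ell (α : ℝ) (j : ℕ) : ℝ := ((j : ℝ) + (2:ℝ) ^ (1/α)) ^ (-α)

noncomputable def slicerA (α : ℝ) (n : ℕ) (j : ℤ) : ℝ :=
  if j.natAbs = n then ell α (n - 1)
  else if j.natAbs < n ∧ j.natAbs % 2 = n % 2 then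
    (if j = 0 then 2 * (ell α 0 - ell α 1)
     else ell α (j.natAbs - 1) - ell α (j.natAbs + 1))
  else 0

noncomputable def msd (α : ℝ) (n : ℕ) : ℝ :=
  ∑ j ∈ Finset.Icc (-(n:ℤ)) (n:ℤ), slicerA α n j * (j:ℝ)^2

open Asymptotics

theorem tendsto_of_tendsto_comp_mul_add {X : Type*} [TopologicalSpace X] {u : ℕ → X} {x : X}
    {k : ℕ} (hk : 0 < k) (h : ∀ r < k, Tendsto (fun m => u (k * m + r)) atTop (𝓝 x)) :
    Tendsto u atTop (𝓝 x) := by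
  intro s hs
  have hall : ∀ᶠ m in atTop, ∀ r : Fin k, u (k * m + r) ∈ s :=
    eventually_all.2 fun r => h r r.isLt hs
  obtain ⟨M, hM⟩ := eventually_atTop.1 hall
  refine eventually_atTop.2 ⟨k * M + k, fun n hn => ?_⟩
  have hMn : M ≤ n / k := (Nat.le_div_iff_mul_le hk).2 (by nlinarith)
  simpa only [Nat.div_add_mod] using hM (n / k) hMn ⟨n % k, Nat.mod_lt n hk⟩

theorem tendsto_div_of_tendsto_sub_div_sub {a b : ℕ → ℝ} {L : ℝ} (hb : StrictMono b)
    (hb_top : Tendsto b atTop atTop)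
    (h : Tendsto (fun n => (a (n + 1) - a n) / (b (n + 1) - b n)) atTop (𝓝 L)) :
    Tendsto (fun n => a n / b n) atTop (𝓝 L) := by
  have hgap : ∀ n, 0 < b (n + 1) - b n := fun n => sub_pos.2 (hb n.lt_succ_self)
  have hstep : (fun n => a (n + 1) - a n - L * (b (n + 1) - b n)) =o[atTop]
      fun n => b (n + 1) - b n := by
    have := ((isLittleO_one_iff ℝ).2 (tendsto_sub_nhds_zero_iff.2 h)).mul_isBigO
      (isBigO_refl (fun n => b (n + 1) - b n) atTop)
    refine this.congr (fun n => ?_) (fun n => one_mul _)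
    field_simp [(hgap n).ne']
  have hgap_sum : Tendsto (fun n => ∑ i ∈ range n, (b (i + 1) - b i)) atTop atTop := by
    simp_rw [Finset.sum_range_sub b]
    exact tendsto_atTop_add_const_right _ _ hb_top
  have hsum : (fun n => a n - a 0 - L * (b n - b 0)) =o[atTop] fun n => b n - b 0 :=
    (hstep.sum_range (fun n => (hgap n).le) hgap_sum).congr
      (fun n => by rw [sum_sub_distrib, ← mul_sum, sum_range_sub, sum_range_sub])
      (fun n => sum_range_sub b n)
  have hb_norm : Tendsto (fun n => ‖b n‖) atTop atTop := tendsto_norm_atTop_atTop.comp hb_top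
  have hsub : (fun n => b n - b 0) =O[atTop] b :=
    (isBigO_refl b atTop).sub ((isLittleO_const_left.2 (Or.inr hb_norm)).isBigO)
  have hmain : (fun n => a n - L * b n) =o[atTop] b := by
    have := (hsum.trans_isBigO hsub).add (isLittleO_const_left.2 (Or.inr hb_norm) :
      (fun _ => a 0 - L * b 0) =o[atTop] b)
    refine this.congr (fun n => by ring) (fun _ => rfl)
  rw [← tendsto_sub_nhds_zero_iff]
  refine hmain.tendsto_div_nhds_zero.congr' ?_
  filter_upwards [hb_top.eventually_gt_atTop 0] with n hn
  field_simp

theorem tendsto_div_of_tendsto_sub_div_sub_of_step {a b : ℕ → ℝ} {L : ℝ} {k : ℕ}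
    (hk : 0 < k) (hb : StrictMono b) (hb_top : Tendsto b atTop atTop)
    (h : Tendsto (fun n => (a (n + k) - a n) / (b (n + k) - b n)) atTop (𝓝 L)) :
    Tendsto (fun n => a n / b n) atTop (𝓝 L) := by
  refine tendsto_of_tendsto_comp_mul_add hk fun r _ => ?_
  have hlin : StrictMono fun m => k * m + r := fun m m' hm =>
    Nat.add_lt_add_right (Nat.mul_lt_mul_of_pos_left hm hk) r
  refine tendsto_div_of_tendsto_sub_div_sub (b := fun m => b (k * m + r)) (hb.comp hlin)
    (hb_top.comp hlin.tendsto_atTop) ?_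
  convert h.comp hlin.tendsto_atTop using 2 with m
  simp only [Function.comp_apply, show k * (m + 1) + r = k * m + r + k by ring]

theorem tendsto_mul_one_add_div_rpow_sub_one (a q : ℝ) :
    Tendsto (fun x : ℝ => x * ((1 + a / x) ^ q - 1)) atTop (𝓝 (a * q)) := by
  rcases eq_or_ne a 0 with rfl | ha
  · simp
  have hslope :=
    (Real.hasDerivAt_rpow_const (x := 1) (p := q) (Or.inl one_ne_zero)).tendsto_slope_zero
  simp only [Real.one_rpow, mul_one, smul_eq_mul] at hslope
  have hdiv : Tendsto (fun x : ℝ => a / x) atTop (𝓝[≠] 0) :=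
    tendsto_nhdsWithin_iff.2 ⟨tendsto_const_nhds.div_atTop tendsto_id,
      (eventually_gt_atTop 0).mono fun x hx => div_ne_zero ha hx.ne'⟩
  refine ((hslope.comp hdiv).const_mul a).congr' ?_
  filter_upwards [eventually_gt_atTop 0] with x hx
  simp only [Function.comp_apply]
  field_simp

theorem rpow_add_eq_rpow_mul_one_add_div {x : ℝ} (hx : 0 < x) {y : ℝ} (hy : 0 ≤ 1 + y / x)
    (s : ℝ) : (x + y) ^ s = x ^ s * (1 + y / x) ^ s := by
  rw [← Real.mul_rpow hx.le hy, mul_add, mul_div_cancel₀ _ hx.ne', mul_one]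

theorem tendsto_rpow_add_mul_sub_div_sub {a : ℝ} (ha : a ≠ 0) (b : ℝ) {q α : ℝ}
    (hqα : q ≠ α) :
    Tendsto (fun x : ℝ =>
        (x + b) ^ (-α) * ((x + a) ^ q - x ^ q) / ((x + a) ^ (q - α) - x ^ (q - α)))
      atTop (𝓝 (q / (q - α))) := by
  have hone : ∀ y : ℝ, Tendsto (fun x : ℝ => 1 + y / x) atTop (𝓝 1) := fun y => by
    simpa using
      (tendsto_const_nhds (x := (1 : ℝ))).add (tendsto_const_nhds.div_atTop tendsto_id)
  have hsmall : ∀ y : ℝ, ∀ᶠ x in atTop, 0 ≤ 1 + y / x := fun y =>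
    (hone y).eventually (eventually_ge_nhds zero_lt_one)
  have hb : Tendsto (fun x : ℝ => (1 + b / x) ^ (-α)) atTop (𝓝 1) := by
    simpa using (hone b).rpow_const (p := -α) (Or.inl one_ne_zero)
  have hlim := (hb.mul (tendsto_mul_one_add_div_rpow_sub_one a q)).div
    (tendsto_mul_one_add_div_rpow_sub_one a (q - α)) (mul_ne_zero ha (sub_ne_zero.2 hqα))
  rw [one_mul, mul_div_mul_left _ _ ha] at hlim
  refine hlim.congr' ?_
  filter_upwards [eventually_gt_atTop 0, hsmall a, hsmall b] with x hx hxa hxb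
  rw [rpow_add_eq_rpow_mul_one_add_div hx hxa, rpow_add_eq_rpow_mul_one_add_div hx hxa,
    rpow_add_eq_rpow_mul_one_add_div hx hxb]
  have hpow : x ^ (-α) * x ^ q = x ^ (q - α) := by
    rw [← Real.rpow_add hx, neg_add_eq_sub]
  calc (1 + b / x) ^ (-α) * (x * ((1 + a / x) ^ q - 1)) / (x * ((1 + a / x) ^ (q - α) - 1))
      = (1 + b / x) ^ (-α) * ((1 + a / x) ^ q - 1) / ((1 + a / x) ^ (q - α) - 1) := by
        rw [mul_left_comm, mul_div_mul_left _ _ hx.ne']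
    _ = x ^ (q - α) * ((1 + b / x) ^ (-α) * ((1 + a / x) ^ q - 1))
          / (x ^ (q - α) * ((1 + a / x) ^ (q - α) - 1)) :=
        (mul_div_mul_left _ _ (Real.rpow_pos_of_pos hx _).ne').symm
    _ = _ := by rw [← hpow]; ring

section

variable (α : ℝ)

theorem slicerA_neg (n : ℕ) (j : ℤ) : slicerA α n (-j) = slicerA α n j := by
  simp only [slicerA, Int.natAbs_neg, neg_eq_zero]

theorem slicerA_self (n : ℕ) : slicerA α n n = ell α (n - 1) := by
  simp [slicerA]

theorem slicerA_add_two_of_lt {n j : ℕ} (hj : j < n) :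
    slicerA α (n + 2) j = slicerA α n j := by
  simp only [slicerA, Int.natAbs_natCast, Nat.cast_eq_zero]
  split_ifs <;> first | rfl | omega

theorem slicerA_add_two_self {n : ℕ} (hn : 1 ≤ n) :
    slicerA α (n + 2) n = ell α (n - 1) - ell α (n + 1) := by
  simp only [slicerA, Int.natAbs_natCast, Nat.cast_eq_zero]
  split_ifs <;> first | rfl | omega

theorem slicerA_add_two_succ (n : ℕ) : slicerA α (n + 2) (n + 1 : ℕ) = 0 := by
  simp only [slicerA, Int.natAbs_natCast]
  split_ifs <;> first | rfl | omega

variable (p : ℕ)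

noncomputable def slicerHalfMoment (n : ℕ) : ℝ :=
  ∑ j ∈ range (n + 1), slicerA α n j * (j : ℝ) ^ p

theorem sum_Icc_slicerA_mul_pow (hp : p ≠ 0) (hpe : Even p) (n : ℕ) :
    ∑ j ∈ Icc (-(n : ℤ)) n, slicerA α n j * (j : ℝ) ^ p = 2 * slicerHalfMoment α p n := by
  have heven : Function.Even fun j : ℤ => slicerA α n j * (j : ℝ) ^ p := fun j => by
    simp only [slicerA_neg, Int.cast_neg, hpe.neg_pow]
  rw [sum_Icc_of_even_eq_range heven, slicerHalfMoment]
  simp [zero_pow hp]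

theorem slicerHalfMoment_add_two {n : ℕ} (hn : 1 ≤ n) :
    slicerHalfMoment α p (n + 2) =
      slicerHalfMoment α p n + ell α (n + 1) * (((n + 2 : ℕ) : ℝ) ^ p - (n : ℝ) ^ p) := by
  rw [slicerHalfMoment, slicerHalfMoment, sum_range_succ, sum_range_succ, sum_range_succ,
    sum_range_succ,
    sum_congr rfl fun j hj => by rw [slicerA_add_two_of_lt α (mem_range.1 hj)],
    slicerA_add_two_self α hn, slicerA_add_two_succ, slicerA_self, slicerA_self]
  rw [show n + 2 - 1 = n + 1 by omega]
  ring

theorem tendsto_slicerHalfMoment_sub_div (hpα : (p : ℝ) ≠ α) :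
    Tendsto (fun n : ℕ => (slicerHalfMoment α p (n + 2) - slicerHalfMoment α p n) /
      (((n + 2 : ℕ) : ℝ) ^ ((p : ℝ) - α) - (n : ℝ) ^ ((p : ℝ) - α)))
      atTop (𝓝 (p / (p - α))) := by
  refine ((tendsto_rpow_add_mul_sub_div_sub two_ne_zero (1 + 2 ^ (1 / α)) hpα).comp
    tendsto_natCast_atTop_atTop).congr' ?_
  filter_upwards [eventually_ge_atTop 1] with n hn
  rw [Function.comp_apply, slicerHalfMoment_add_two α p hn, add_sub_cancel_left, ell]
  push_cast
  simp only [Real.rpow_natCast, add_assoc]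

end

theorem slicer_higher_even_moments_general (α : ℝ) (hα2 : α < 2)
    (p : ℕ) (hp : 2 < p) (hpe : Even p) :
    Filter.Tendsto
      (fun n : ℕ =>
        (∑ j ∈ Finset.Icc (-(n:ℤ)) (n:ℤ), slicerA α n j * (j:ℝ)^p) / (n:ℝ) ^ ((p:ℝ) - α))
      Filter.atTop (nhds (2 * p / ((p:ℝ) - α))) := by
  have hβ : 0 < (p : ℝ) - α := by
    have : (2 : ℝ) < p := by exact_mod_cast hp
    linarith
  have hb : StrictMono fun n : ℕ => (n : ℝ) ^ ((p : ℝ) - α) := fun m n hmn =>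
    Real.rpow_lt_rpow (Nat.cast_nonneg m) (Nat.cast_lt.2 hmn) hβ
  have hb_top : Tendsto (fun n : ℕ => (n : ℝ) ^ ((p : ℝ) - α)) atTop atTop :=
    (tendsto_rpow_atTop hβ).comp tendsto_natCast_atTop_atTop
  have hhalf := tendsto_div_of_tendsto_sub_div_sub_of_step two_pos hb hb_top
    (tendsto_slicerHalfMoment_sub_div α p (sub_pos.1 hβ).ne')
  rw [mul_div_assoc]
  refine (hhalf.const_mul 2).congr fun n => ?_
  rw [sum_Icc_slicerA_mul_pow α p (by omega) hpe, mul_div_assoc]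

theorem slicer_higher_even_moments (α : ℝ) (hα : 0 < α) (hα2 : α < 2)
    (p : ℕ) (hp : 2 < p) (hpe : Even p) :
    Filter.Tendsto
      (fun n : ℕ =>
        (∑ j ∈ Finset.Icc (-(n:ℤ)) (n:ℤ), slicerA α n j * (j:ℝ)^p) / (n:ℝ) ^ ((p:ℝ) - α))
      Filter.atTop (nhds (2 * p / ((p:ℝ) - α))) :=
  slicer_higher_even_moments_general α hα2 p hp hpe
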